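/- The following are equivalent: (1) φ has exactly one prime implicant; (2) the cubical set C_φ is a convex subset of [0,1]^n; (3) the semantic loss L(μ) = −log Σ_{w : φ(w)=1} p_μ(w) is a convex function of μ on its domain {μ ∈ [0,1]^n : Σ_{w : φ(w)=1} p_μ(w) > 0}. -/

import Mathlib

/-- A world is an assignment of Boolean values to `n` variables. -/
abbrev World (n : ℕ) := Fin n → Bool

/-- The independent distribution with parameters `μ`:
`p_μ(w) = ∏ i, μ i ^ (w i) * (1 - μ i) ^ (1 - w i)`. -/
def pInd {n : ℕ} (μ : Fin n → ℝ) (w : World n) : ℝ :=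
  ∏ i, if w i then μ i else 1 - μ i

/-- A partial assignment with domain `D` and values `a` covers the world `w`. -/
def covers {n : ℕ} (D : Set (Fin n)) (a : Fin n → Bool) (w : World n) : Prop :=
  ∀ i ∈ D, w i = a i

/-- The cover of a partial assignment: all worlds agreeing with it on its domain. -/
def coverSet {n : ℕ} (D : Set (Fin n)) (a : Fin n → Bool) : Set (World n) :=
  {w | covers D a w}

/-- A partial assignment is an implicant of `φ` if every world in its cover is possible. -/
def Implicant {n : ℕ} (φ : World n → Bool) (D : Set (Fin n)) (a : Fin n → Bool) : Prop :=
  ∀ w : World n, covers D a w → φ w = true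

/-- A prime implicant: an implicant whose cover is not strictly contained in the cover
of another implicant. -/
def PrimeImplicant {n : ℕ} (φ : World n → Bool) (D : Set (Fin n)) (a : Fin n → Bool) : Prop :=
  Implicant φ D a ∧ ∀ (E : Set (Fin n)) (b : Fin n → Bool),
    Implicant φ E b → ¬ (coverSet D a ⊂ coverSet E b)

/-- The deterministic coordinates of the parameter vector `μ`. -/
def detDom {n : ℕ} (μ : Fin n → ℝ) : Set (Fin n) := {i | μ i = 0 ∨ μ i = 1}

/-- The value assigned by `μ` at a deterministic coordinate. -/
noncomputable def detVal {n : ℕ} (μ : Fin n → ℝ) (i : Fin n) : Bool :=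
  if μ i = 1 then true else false

/-- A distribution over worlds: nonnegative, summing to one. -/
def IsDistribution {n : ℕ} (p : World n → ℝ) : Prop :=
  (∀ w, 0 ≤ p w) ∧ ∑ w, p w = 1

/-- A distribution is possible for `φ` if it vanishes on all impossible worlds. -/
def PossibleDist {n : ℕ} (φ : World n → Bool) (p : World n → ℝ) : Prop :=
  ∀ w, φ w = false → p w = 0

/-- The unit hypercube of parameters. -/
def unitCube (n : ℕ) : Set (Fin n → ℝ) := {μ | ∀ i, μ i ∈ Set.Icc (0:ℝ) 1}

/-- The implicant cube of a partial assignment: coordinates in `D` are fixed,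
the others range over `[0,1]`. -/
def implicantCube {n : ℕ} (D : Set (Fin n)) (a : Fin n → Bool) : Set (Fin n → ℝ) :=
  {μ | (∀ i, μ i ∈ Set.Icc (0:ℝ) 1) ∧ ∀ i ∈ D, μ i = if a i then 1 else 0}

/-- The cubical set of `φ`: the union of the prime implicant cubes. -/
def cubicalSet {n : ℕ} (φ : World n → Bool) : Set (Fin n → ℝ) :=
  ⋃ (D : Set (Fin n)) (a : Fin n → Bool) (_ : PrimeImplicant φ D a), implicantCube D a

/-- The weighted model count `Σ_{w : φ(w)=1} p_μ(w)`. -/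
noncomputable def WMC {n : ℕ} (φ : World n → Bool) (μ : Fin n → ℝ) : ℝ :=
  ∑ w : World n, if φ w then pInd μ w else 0

/-- A world regarded as a point of `[0,1]^n ⊆ ℝ^n`. -/
def worldPoint {n : ℕ} (w : World n) : Fin n → ℝ := fun i => if w i then 1 else 0

/-- An elementary interval is `{0}`, `{1}` or `[0,1]`. -/
def ElemInterval (I : Set ℝ) : Prop := I = {0} ∨ I = {1} ∨ I = Set.Icc 0 1

/-- An elementary cube is a product of elementary intervals. -/
def IsElemCube {n : ℕ} (C : Set (Fin n → ℝ)) : Prop :=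
  ∃ I : Fin n → Set ℝ, (∀ i, ElemInterval (I i)) ∧ C = {x | ∀ i, x i ∈ I i}

/-!
If `φ` has a unique prime implicant `(D, a)`, every model of `φ` lies in its cover. Hence `C_φ`
is the single cube `C_{(D,a)}`, and the weighted model count factors as a product over `i ∈ D`
of the affine functions `μ ↦ μ i` or `μ ↦ 1 - μ i`, so the loss is a sum of `-log`s of positive
affine functions.

Conversely, suppose two prime implicants have different covers, and let `m` be the midpoint of
the centres of their cubes (free coordinates set to `1/2`). An implicant cube is a face of
`[0,1]^n`, so if it contains `m` it contains both centres. Then both covers lie inside its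
cover, and primality makes the two covers equal. So `m ∉ C_φ`, which contradicts (2). The loss
vanishes exactly on implicant cubes, so `L(m) > 0 = (L(c₁) + L(c₂)) / 2`, which contradicts (3).
-/

lemma Finset.prod_pos_iff_of_nonneg {ι R : Type*} [CommMonoidWithZero R] [PartialOrder R]
    [ZeroLEOneClass R] [PosMulStrictMono R] [Nontrivial R] {s : Finset ι} {f : ι → R}
    (h0 : ∀ i ∈ s, 0 ≤ f i) : 0 < ∏ i ∈ s, f i ↔ ∀ i ∈ s, 0 < f i := by
  refine ⟨fun h i hi => (h0 i hi).lt_of_ne fun hi0 => ?_, Finset.prod_pos⟩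
  exact h.ne' (Finset.prod_eq_zero hi hi0.symm)

theorem convexOn_neg_log_prod {ι E : Type*} [Fintype ι] [AddCommGroup E] [Module ℝ E]
    {s : Set E} (hs : Convex ℝ s) (g : ι → E →ᵃ[ℝ] ℝ) :
    ConvexOn ℝ {x ∈ s | ∀ i, 0 < g i x} (fun x => -Real.log (∏ i, g i x)) := by
  have hconv : Convex ℝ {x ∈ s | ∀ i, 0 < g i x} := by
    have : {x ∈ s | ∀ i, 0 < g i x} = s ∩ ⋂ i, g i ⁻¹' Set.Ioi 0 := by ext; simp
    exact this ▸ hs.inter (convex_iInter fun i => (convex_Ioi 0).affine_preimage (g i))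
  have hterm (i : ι) : ConvexOn ℝ {x ∈ s | ∀ i, 0 < g i x} (fun x => -Real.log (g i x)) :=
    (strictConcaveOn_log_Ioi.concaveOn.neg.comp_affineMap (g i)).subset (fun x hx => hx.2 i) hconv
  have hsum : ConvexOn ℝ {x ∈ s | ∀ i, 0 < g i x} (∑ i, fun x => -Real.log (g i x)) :=
    Finset.sum_induction _ (ConvexOn ℝ _) (fun _ _ => ConvexOn.add) (convexOn_const 0 hconv)
      fun i _ => hterm i
  refine hsum.congr fun x hx => ?_
  simp only [Finset.sum_apply, Finset.sum_neg_distrib]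
  rw [Real.log_prod fun i _ => (hx.2 i).ne']

lemma Fintype.sum_prod_bool {ι R : Type*} [Fintype ι] [DecidableEq ι] [CommSemiring R]
    (g : ι → Bool → R) : ∑ w : ι → Bool, ∏ i, g i (w i) = ∏ i, (g i true + g i false) := by
  simp only [← Fintype.sum_bool, Finset.prod_univ_sum, Fintype.piFinset_univ]

section Implicants

variable {n : ℕ} {φ : World n → Bool} {D E : Set (Fin n)} {a b : Fin n → Bool}

lemma mem_coverSet_self (D : Set (Fin n)) (a : Fin n → Bool) : a ∈ coverSet D a :=
  fun _ _ => rfl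

lemma Implicant.mono (h : Implicant φ E b) (hsub : coverSet D a ⊆ coverSet E b) :
    Implicant φ D a :=
  fun w hw => h w (hsub hw)

lemma implicant_univ (w : World n) (hw : φ w = true) : Implicant φ Set.univ w := by
  intro w' hw'
  rwa [show w' = w from funext fun i => hw' i trivial]

lemma PrimeImplicant.coverSet_eq_of_subset (hp : PrimeImplicant φ D a) (h : Implicant φ E b)
    (hsub : coverSet D a ⊆ coverSet E b) : coverSet D a = coverSet E b :=
  hsub.antisymm <| by_contra fun hsup => hp.2 E b h ⟨hsub, hsup⟩

lemma Implicant.exists_primeImplicant (h : Implicant φ D a) :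
    ∃ E b, PrimeImplicant φ E b ∧ coverSet D a ⊆ coverSet E b := by
  obtain ⟨_, hsub, ⟨E, b, hE, rfl⟩, hmax⟩ :=
    (Set.toFinite {T | ∃ E b, Implicant φ E b ∧ T = coverSet E b}).exists_le_maximal
      ⟨D, a, h, rfl⟩
  exact ⟨E, b, ⟨hE, fun E' b' hE' hss => hss.2 (hmax ⟨E', b', hE', rfl⟩ hss.1)⟩, hsub⟩

lemma implicantCube_subset_of_coverSet_subset (h : coverSet D a ⊆ coverSet E b) :
    implicantCube D a ⊆ implicantCube E b := by
  classical
  have hE : ∀ i ∈ E, i ∈ D ∧ a i = b i := by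
    intro i hi
    have hab : a i = b i := h (mem_coverSet_self D a) i hi
    refine ⟨by_contra fun hiD => ?_, hab⟩
    have hflip : Function.update a i (!a i) ∈ coverSet D a := fun j hj =>
      Function.update_of_ne (ne_of_mem_of_not_mem hj hiD) _ _
    simpa [hab] using h hflip i hi
  rintro μ ⟨hμ, hμD⟩
  exact ⟨hμ, fun i hi => (hE i hi).2 ▸ hμD i (hE i hi).1⟩

end Implicants

section Cubes

variable {n : ℕ} {D E : Set (Fin n)} {a b : Fin n → Bool}

open Classical in
lemma implicantCube_eq_pi (D : Set (Fin n)) (a : Fin n → Bool) :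
    implicantCube D a =
      Set.univ.pi fun i => if i ∈ D then {if a i then 1 else 0} else Set.Icc 0 1 := by
  ext μ
  simp only [implicantCube, Set.mem_ofPred_eq, Set.mem_univ_pi]
  refine ⟨fun h i => ?_, fun h => ⟨fun i => ?_, fun i hi => by simpa [hi] using h i⟩⟩
  · by_cases hi : i ∈ D
    · rw [if_pos hi]; exact h.2 i hi
    · rw [if_neg hi]; exact h.1 i
  · have hi := h i
    split_ifs at hi <;> simp_all

lemma convex_implicantCube (D : Set (Fin n)) (a : Fin n → Bool) :
    Convex ℝ (implicantCube D a) := by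
  rw [implicantCube_eq_pi]
  refine convex_pi fun i _ => ?_
  split_ifs <;> first | exact convex_singleton _ | exact convex_Icc 0 1

lemma convex_unitCube : Convex ℝ (unitCube n) := by
  have : unitCube n = Set.Icc 0 1 := by ext; simp [unitCube, Pi.le_def, forall_and]
  exact this ▸ convex_Icc 0 1

open Classical in
noncomputable def implicantCenter (D : Set (Fin n)) (a : Fin n → Bool) : Fin n → ℝ :=
  fun i => if i ∈ D then (if a i then 1 else 0) else 1 / 2

lemma implicantCenter_mem_implicantCube (D : Set (Fin n)) (a : Fin n → Bool) :
    implicantCenter D a ∈ implicantCube D a := by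
  refine ⟨fun i => ?_, fun i hi => by simp [implicantCenter, hi]⟩
  unfold implicantCenter
  split_ifs <;> norm_num

lemma coverSet_subset_of_implicantCenter_mem (h : implicantCenter D a ∈ implicantCube E b) :
    coverSet D a ⊆ coverSet E b := by
  have hE : ∀ i ∈ E, i ∈ D ∧ a i = b i := by
    intro i hi
    have := h.2 i hi
    simp only [implicantCenter] at this
    split_ifs at this <;> cases hb : b i <;> cases ha : a i <;> simp_all
  intro w hw i hi
  rw [← (hE i hi).2]
  exact hw i (hE i hi).1

lemma mem_implicantCube_of_midpoint_mem {x y : Fin n → ℝ} (hx : x ∈ unitCube n)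
    (hy : y ∈ unitCube n) (h : (1 / 2 : ℝ) • x + (1 / 2 : ℝ) • y ∈ implicantCube E b) :
    x ∈ implicantCube E b := by
  refine ⟨hx, fun i hi => ?_⟩
  have hxy := h.2 i hi
  simp only [Pi.add_apply, Pi.smul_apply, smul_eq_mul] at hxy
  obtain ⟨hx0, hx1⟩ := hx i
  obtain ⟨hy0, hy1⟩ := hy i
  split_ifs at hxy ⊢ <;> linarith

lemma mem_implicantCube_detDom {μ : Fin n → ℝ} (hμ : μ ∈ unitCube n) :
    μ ∈ implicantCube (detDom μ) (detVal μ) :=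
  ⟨hμ, fun i hi => by rcases hi with h | h <;> simp [detVal, h]⟩

lemma coverSet_detDom_subset {μ : Fin n → ℝ} (h : μ ∈ implicantCube E b) :
    coverSet (detDom μ) (detVal μ) ⊆ coverSet E b := by
  intro w hw i hi
  have hμi := h.2 i hi
  rw [hw i (by cases b i <;> simp [detDom, hμi])]
  cases hb : b i <;> simp [detVal, hμi, hb]

end Cubes

section WeightedModelCount

variable {n : ℕ} {φ : World n → Bool} {D E : Set (Fin n)} {a b : Fin n → Bool} {μ : Fin n → ℝ}

lemma pInd_nonneg (hμ : μ ∈ unitCube n) (w : World n) : 0 ≤ pInd μ w :=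
  Finset.prod_nonneg fun i _ => by obtain ⟨h0, h1⟩ := hμ i; split <;> linarith

lemma sum_pInd (μ : Fin n → ℝ) : ∑ w, pInd μ w = 1 := by
  simp [pInd, Fintype.sum_prod_bool fun i b => if b then μ i else 1 - μ i]

lemma pInd_pos_iff (hμ : μ ∈ unitCube n) {w : World n} :
    0 < pInd μ w ↔ covers (detDom μ) (detVal μ) w := by
  rw [pInd, Finset.prod_pos_iff_of_nonneg fun i _ => ?_]
  · simp only [Finset.mem_univ, true_implies]
    refine forall_congr' fun i => ?_
    obtain ⟨h0, h1⟩ := hμ i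
    cases w i <;> by_cases hz : μ i = 0 <;> by_cases ho : μ i = 1 <;>
      simp [detDom, detVal, hz, ho] <;> grind
  · obtain ⟨h0, h1⟩ := hμ i; split <;> linarith

lemma one_sub_WMC (μ : Fin n → ℝ) : 1 - WMC φ μ = ∑ w, if φ w then 0 else pInd μ w := by
  rw [← sum_pInd μ, WMC, ← Finset.sum_sub_distrib]
  exact Finset.sum_congr rfl fun w _ => by split <;> ring

lemma WMC_le_one (hμ : μ ∈ unitCube n) : WMC φ μ ≤ 1 := by
  rw [← sub_nonneg, one_sub_WMC]
  exact Finset.sum_nonneg fun w _ => by split <;> simp [pInd_nonneg hμ w]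

lemma WMC_eq_one_iff (hμ : μ ∈ unitCube n) :
    WMC φ μ = 1 ↔ Implicant φ (detDom μ) (detVal μ) := by
  rw [eq_comm, ← sub_eq_zero, one_sub_WMC,
    Finset.sum_eq_zero_iff_of_nonneg fun w _ => by split <;> simp [pInd_nonneg hμ w]]
  refine forall_congr' fun w => ?_
  rw [← pInd_pos_iff hμ, (pInd_nonneg hμ w).lt_iff_ne']
  cases φ w <;> simp

lemma WMC_eq_one_of_mem_implicantCube (h : Implicant φ E b) (hμ : μ ∈ implicantCube E b) :
    WMC φ μ = 1 :=
  (WMC_eq_one_iff hμ.1).2 (h.mono (coverSet_detDom_subset hμ))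

open Classical in
noncomputable def implicantFactor (D : Set (Fin n)) (a : Fin n → Bool) (i : Fin n) :
    (Fin n → ℝ) →ᵃ[ℝ] ℝ :=
  if i ∈ D then
    if a i then (LinearMap.proj i).toAffineMap
    else AffineMap.const ℝ _ 1 - (LinearMap.proj i).toAffineMap
  else AffineMap.const ℝ _ 1

open Classical in
lemma implicantFactor_apply (i : Fin n) :
    implicantFactor D a i μ = if i ∈ D then (if a i then μ i else 1 - μ i) else 1 := by
  unfold implicantFactor
  split_ifs <;> simp

lemma implicantFactor_nonneg (hμ : μ ∈ unitCube n) (i : Fin n) : 0 ≤ implicantFactor D a i μ := by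
  obtain ⟨h0, h1⟩ := hμ i
  rw [implicantFactor_apply]
  split_ifs <;> linarith

lemma WMC_eq_prod_implicantFactor (hφ : ∀ w, φ w = true ↔ covers D a w) (μ : Fin n → ℝ) :
    WMC φ μ = ∏ i, implicantFactor D a i μ := by
  classical
  set f : Fin n → Bool → ℝ := fun i c =>
    if i ∈ D ∧ c ≠ a i then 0 else if c then μ i else 1 - μ i
  have hterm (w : World n) : (if φ w then pInd μ w else 0) = ∏ i, f i (w i) := by
    by_cases hw : covers D a w
    · rw [if_pos ((hφ w).2 hw)]
      exact Finset.prod_congr rfl fun i _ => (if_neg fun h => h.2 (hw i h.1)).symm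
    · rw [if_neg (mt (hφ w).1 hw)]
      obtain ⟨i, hi, hne⟩ : ∃ i ∈ D, w i ≠ a i := by simpa [covers] using hw
      exact (Finset.prod_eq_zero (Finset.mem_univ i) (by simp [f, hi, hne])).symm
  rw [WMC, Finset.sum_congr rfl fun w _ => hterm w, Fintype.sum_prod_bool]
  refine Finset.prod_congr rfl fun i _ => ?_
  rw [implicantFactor_apply]
  by_cases hi : i ∈ D <;> cases ha : a i <;> simp [f, hi, ha]

lemma convexOn_neg_log_WMC (hφ : ∀ w, φ w = true ↔ covers D a w) :
    ConvexOn ℝ {μ | μ ∈ unitCube n ∧ 0 < WMC φ μ} (fun μ => -Real.log (WMC φ μ)) := by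
  have hdom : {μ | μ ∈ unitCube n ∧ 0 < WMC φ μ} =
      {μ ∈ unitCube n | ∀ i, 0 < implicantFactor D a i μ} := by
    ext μ
    refine and_congr_right fun hμ => ?_
    rw [WMC_eq_prod_implicantFactor hφ,
      Finset.prod_pos_iff_of_nonneg fun i _ => implicantFactor_nonneg hμ i]
    simp
  rw [hdom]
  simpa only [WMC_eq_prod_implicantFactor hφ] using
    convexOn_neg_log_prod convex_unitCube (implicantFactor D a)

lemma WMC_midpoint_eq_one
    (h : ConvexOn ℝ {μ | μ ∈ unitCube n ∧ 0 < WMC φ μ} (fun μ => -Real.log (WMC φ μ)))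
    {x y : Fin n → ℝ} (hx : x ∈ unitCube n) (hy : y ∈ unitCube n) (hx₁ : WMC φ x = 1)
    (hy₁ : WMC φ y = 1) : WMC φ ((1 / 2 : ℝ) • x + (1 / 2 : ℝ) • y) = 1 := by
  have hxD : x ∈ {μ | μ ∈ unitCube n ∧ 0 < WMC φ μ} := ⟨hx, hx₁ ▸ one_pos⟩
  have hyD : y ∈ {μ | μ ∈ unitCube n ∧ 0 < WMC φ μ} := ⟨hy, hy₁ ▸ one_pos⟩
  obtain ⟨hmid, hpos⟩ := h.1 hxD hyD one_half_pos.le one_half_pos.le (add_halves 1)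
  have hle := h.2 hxD hyD one_half_pos.le one_half_pos.le (add_halves 1)
  simp only [hx₁, hy₁, Real.log_one, neg_zero, smul_zero, add_zero, neg_nonpos] at hle
  exact le_antisymm (WMC_le_one hmid) ((Real.log_nonneg_iff hpos).1 hle)

end WeightedModelCount

section PrimeCovers

variable {n : ℕ} {φ : World n → Bool} {D : Set (Fin n)} {a : Fin n → Bool}

def primeCovers (φ : World n → Bool) : Set (Set (World n)) :=
  {T | ∃ (D : Set (Fin n)) (a : Fin n → Bool), PrimeImplicant φ D a ∧ T = coverSet D a}

lemma mem_cubicalSet {μ : Fin n → ℝ} :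
    μ ∈ cubicalSet φ ↔ ∃ D a, PrimeImplicant φ D a ∧ μ ∈ implicantCube D a := by
  simp [cubicalSet]

lemma exists_primeImplicant_of_ncard_primeCovers_eq_one (h : (primeCovers φ).ncard = 1) :
    ∃ D a, PrimeImplicant φ D a ∧
      ∀ E b, PrimeImplicant φ E b → coverSet E b = coverSet D a := by
  obtain ⟨T, hT⟩ := Set.ncard_eq_one.1 h
  obtain ⟨D, a, hp, rfl⟩ : T ∈ primeCovers φ := hT ▸ Set.mem_singleton T
  exact ⟨D, a, hp, fun E b hE => Set.mem_singleton_iff.1 (hT ▸ ⟨E, b, hE, rfl⟩)⟩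

lemma eq_true_iff_covers_of_unique (hp : PrimeImplicant φ D a)
    (huniq : ∀ E b, PrimeImplicant φ E b → coverSet E b = coverSet D a) (w : World n) :
    φ w = true ↔ covers D a w := by
  refine ⟨fun hw => ?_, hp.1 w⟩
  obtain ⟨E, b, hE, hsub⟩ := (implicant_univ w hw).exists_primeImplicant
  exact (huniq E b hE ▸ hsub (mem_coverSet_self _ _) : w ∈ coverSet D a)

lemma cubicalSet_eq_implicantCube_of_unique (hp : PrimeImplicant φ D a)
    (huniq : ∀ E b, PrimeImplicant φ E b → coverSet E b = coverSet D a) :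
    cubicalSet φ = implicantCube D a := by
  ext μ
  refine mem_cubicalSet.trans ⟨fun ⟨E, b, hE, hμ⟩ => ?_, fun hμ => ⟨D, a, hp, hμ⟩⟩
  exact implicantCube_subset_of_coverSet_subset (huniq E b hE).le hμ

lemma exists_primeImplicants_coverSet_ne (hφ : ∃ w, φ w = true)
    (h : (primeCovers φ).ncard ≠ 1) :
    ∃ D₁ a₁ D₂ a₂, PrimeImplicant φ D₁ a₁ ∧ PrimeImplicant φ D₂ a₂ ∧
      coverSet D₁ a₁ ≠ coverSet D₂ a₂ := by
  obtain ⟨w, hw⟩ := hφ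
  obtain ⟨D, a, hp, -⟩ := (implicant_univ w hw).exists_primeImplicant
  have hne : (primeCovers φ).Nonempty := ⟨_, D, a, hp, rfl⟩
  rcases hne.exists_eq_singleton_or_nontrivial with ⟨T, hT⟩ | hnt
  · exact absurd (hT ▸ Set.ncard_singleton T) h
  · obtain ⟨_, ⟨D₁, a₁, hp₁, rfl⟩, _, ⟨D₂, a₂, hp₂, rfl⟩, hne⟩ := hnt
    exact ⟨D₁, a₁, D₂, a₂, hp₁, hp₂, hne⟩

theorem ncard_primeCovers_eq_one_of_midpoint (hφ : ∃ w, φ w = true)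
    (h : ∀ D₁ a₁ D₂ a₂, PrimeImplicant φ D₁ a₁ → PrimeImplicant φ D₂ a₂ → ∃ E b, Implicant φ E b ∧
      (1 / 2 : ℝ) • implicantCenter D₁ a₁ + (1 / 2 : ℝ) • implicantCenter D₂ a₂ ∈
        implicantCube E b) :
    (primeCovers φ).ncard = 1 := by
  by_contra hncard
  obtain ⟨D₁, a₁, D₂, a₂, hp₁, hp₂, hne⟩ := exists_primeImplicants_coverSet_ne hφ hncard
  obtain ⟨E, b, hE, hmid⟩ := h D₁ a₁ D₂ a₂ hp₁ hp₂
  have hc₁ := (implicantCenter_mem_implicantCube D₁ a₁).1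
  have hc₂ := (implicantCenter_mem_implicantCube D₂ a₂).1
  refine hne ((hp₁.coverSet_eq_of_subset hE ?_).trans (hp₂.coverSet_eq_of_subset hE ?_).symm)
  · exact coverSet_subset_of_implicantCenter_mem (mem_implicantCube_of_midpoint_mem hc₁ hc₂ hmid)
  · rw [add_comm] at hmid
    exact coverSet_subset_of_implicantCenter_mem (mem_implicantCube_of_midpoint_mem hc₂ hc₁ hmid)

end PrimeCovers

theorem stmt4_general (n : ℕ) (φ : World n → Bool) (hφ : ∃ w, φ w = true) :
    List.TFAE [
      -- (1) there is exactly one prime implicant of `φ`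
      {T : Set (World n) | ∃ (D : Set (Fin n)) (a : Fin n → Bool),
        PrimeImplicant φ D a ∧ T = coverSet D a}.ncard = 1,
      -- (2) the cubical set `C_φ` is convex
      Convex ℝ (cubicalSet φ),
      -- (3) the semantic loss is convex on its domain
      ConvexOn ℝ {μ : Fin n → ℝ | μ ∈ unitCube n ∧ 0 < WMC φ μ}
        (fun μ => -Real.log (WMC φ μ))] := by
  tfae_have 1 → 2 := fun h => by
    obtain ⟨D, a, hp, huniq⟩ := exists_primeImplicant_of_ncard_primeCovers_eq_one h
    exact cubicalSet_eq_implicantCube_of_unique hp huniq ▸ convex_implicantCube D a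
  tfae_have 1 → 3 := fun h => by
    obtain ⟨D, a, hp, huniq⟩ := exists_primeImplicant_of_ncard_primeCovers_eq_one h
    exact convexOn_neg_log_WMC (eq_true_iff_covers_of_unique hp huniq)
  tfae_have 2 → 1 := fun h =>
    ncard_primeCovers_eq_one_of_midpoint hφ fun D₁ a₁ D₂ a₂ hp₁ hp₂ => by
    obtain ⟨E, b, hE, hmid⟩ := mem_cubicalSet.1 <|
      h (mem_cubicalSet.2 ⟨D₁, a₁, hp₁, implicantCenter_mem_implicantCube D₁ a₁⟩)
        (mem_cubicalSet.2 ⟨D₂, a₂, hp₂, implicantCenter_mem_implicantCube D₂ a₂⟩)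
        one_half_pos.le one_half_pos.le (add_halves 1)
    exact ⟨E, b, hE.1, hmid⟩
  tfae_have 3 → 1 := fun h =>
    ncard_primeCovers_eq_one_of_midpoint hφ fun D₁ a₁ D₂ a₂ hp₁ hp₂ => by
    have hc₁ := implicantCenter_mem_implicantCube D₁ a₁
    have hc₂ := implicantCenter_mem_implicantCube D₂ a₂
    have hmid := convex_unitCube hc₁.1 hc₂.1 one_half_pos.le one_half_pos.le (add_halves 1)
    have hWMC := WMC_midpoint_eq_one h hc₁.1 hc₂.1 (WMC_eq_one_of_mem_implicantCube hp₁.1 hc₁)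
      (WMC_eq_one_of_mem_implicantCube hp₂.1 hc₂)
    exact ⟨_, _, (WMC_eq_one_iff hmid).1 hWMC, mem_implicantCube_detDom hmid⟩
  tfae_finish

/-- Convexity: `φ` has exactly one prime implicant iff `C_φ` is convex
iff the semantic loss is convex on its domain. -/
theorem stmt4 (n : ℕ) (hn : 1 ≤ n) (φ : World n → Bool) (hφ : ∃ w, φ w = true) :
    List.TFAE [
      -- (1) there is exactly one prime implicant of `φ`
      {T : Set (World n) | ∃ (D : Set (Fin n)) (a : Fin n → Bool),
        PrimeImplicant φ D a ∧ T = coverSet D a}.ncard = 1,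
      -- (2) the cubical set `C_φ` is convex
      Convex ℝ (cubicalSet φ),
      -- (3) the semantic loss is convex on its domain
      ConvexOn ℝ {μ : Fin n → ℝ | μ ∈ unitCube n ∧ 0 < WMC φ μ}
        (fun μ => -Real.log (WMC φ μ))] :=
  stmt4_general n φ hφ
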